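/- arXiv:1512.08912 — 2 statements merged into one kernel-verified Lean document; each statement's English description precedes it below -/
import Mathlib

section
/- (Skorohod's deterministic reflection lemma, existence) Let X : [0,∞) → ℝ be continuous with X_0 = 0. Define F_t = sup_{s ≤ t} X_s⁻ (where x⁻ = max(-x, 0)) and Z_t = X_t + F_t. Then: (1) Z_t ≥ 0 for all t; (2) F is nondecreasing, continuous, with F_0 = 0; (3) F increases only on the set {t : Z_t = 0}, i.e., the Stieltjes measure dF is carried by {t : Z_t = 0}. -/
/-!
`F` is the running maximum of the continuous function `X⁻`. Writing `[a, t]` as the affine image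
of `[0, 1]` turns it into a supremum over a fixed compact set of a jointly continuous function,
hence `F` is continuous. If `F` grew on `[a, b]`, the maximum of `X⁻` on `[0, b]` would be attained
at some `s > a` with `F s = X⁻ s > 0`, i.e. `Z s = 0`.
-/

/-- The Skorohod regulator `F_t = sup_{s ≤ t} X_s⁻`. -/
noncomputable def skorohodF (X : ℝ → ℝ) (t : ℝ) : ℝ :=
  sSup ((fun s => max (-X s) 0) '' Set.Icc 0 t)

open Set

lemma image_Icc_eq_image_affine_Icc_zero_one {α : Type*} (g : ℝ → α) {a t : ℝ} (ht : a ≤ t) :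
    g '' Icc a t = (fun u => g (a + (t - a) * u)) '' Icc 0 1 := by
  have h := image_mul_left_Icc (sub_nonneg.2 ht) zero_le_one
  rw [mul_zero, mul_one] at h
  rw [← image_image (fun v => g (a + v)) (fun u => (t - a) * u), h, ← image_image g (a + ·),
    image_const_add_Icc, add_zero, add_sub_cancel]

theorem continuousOn_sSup_image_Icc {g : ℝ → ℝ} (hg : Continuous g) (a : ℝ) :
    ContinuousOn (fun t => sSup (g '' Icc a t)) (Ici a) := by
  have h : Continuous fun t => sSup ((fun u => g (a + (t - a) * u)) '' Icc 0 1) :=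
    isCompact_Icc.continuous_sSup (by fun_prop)
  exact h.continuousOn.congr fun t ht => by
    rw [image_Icc_eq_image_affine_Icc_zero_one g ht]

theorem monotoneOn_sSup_image_Icc {g : ℝ → ℝ} (hg : Continuous g) (a : ℝ) :
    MonotoneOn (fun t => sSup (g '' Icc a t)) (Ici a) := fun _ hs _ _ hst =>
  csSup_le_csSup (isCompact_Icc.bddAbove_image hg.continuousOn) ((nonempty_Icc.2 hs).image g)
    (image_mono (Icc_subset_Icc_right hst))

section Skorohod

variable {X : ℝ → ℝ}

lemma continuous_max_neg_zero (hX : Continuous X) : Continuous fun s => max (-X s) 0 := by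
  fun_prop

lemma le_skorohodF (hX : Continuous X) {s t : ℝ} (hs : s ∈ Icc 0 t) :
    max (-X s) 0 ≤ skorohodF X t :=
  (continuous_max_neg_zero hX).continuousOn.le_sSup_image_Icc hs

lemma exists_skorohodF_eq (hX : Continuous X) {t : ℝ} (ht : 0 ≤ t) :
    ∃ s ∈ Icc 0 t, max (-X s) 0 = skorohodF X t := by
  obtain ⟨s, hs, hmax, -⟩ := isCompact_Icc.exists_sSup_image_eq_and_ge (nonempty_Icc.2 ht)
    (continuous_max_neg_zero hX).continuousOn
  exact ⟨s, hs, hmax.symm⟩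

lemma skorohodF_nonneg (hX : Continuous X) {t : ℝ} (ht : 0 ≤ t) : 0 ≤ skorohodF X t :=
  (le_max_right _ _).trans (le_skorohodF hX ⟨le_rfl, ht⟩)

lemma skorohodF_zero (hX0 : X 0 = 0) : skorohodF X 0 = 0 := by
  simp [skorohodF, hX0]

lemma monotoneOn_skorohodF (hX : Continuous X) : MonotoneOn (skorohodF X) (Ici 0) :=
  monotoneOn_sSup_image_Icc (continuous_max_neg_zero hX) 0

lemma continuousOn_skorohodF (hX : Continuous X) : ContinuousOn (skorohodF X) (Ici 0) :=
  continuousOn_sSup_image_Icc (continuous_max_neg_zero hX) 0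

lemma add_skorohodF_nonneg (hX : Continuous X) {t : ℝ} (ht : 0 ≤ t) :
    0 ≤ X t + skorohodF X t := by
  have := le_skorohodF hX ⟨ht, le_rfl⟩
  linarith [le_max_left (-X t) 0]

lemma skorohodF_eq_of_pos (hX : Continuous X) {a b : ℝ} (ha : 0 ≤ a) (hab : a ≤ b)
    (hpos : ∀ s ∈ Icc a b, 0 < X s + skorohodF X s) : skorohodF X a = skorohodF X b := by
  have hb : 0 ≤ b := ha.trans hab
  refine le_antisymm (monotoneOn_skorohodF hX ha hb hab) ?_
  obtain ⟨s, hs, hFb⟩ := exists_skorohodF_eq hX hb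
  rcases le_or_gt s a with hsa | has
  · exact hFb ▸ le_skorohodF hX ⟨hs.1, hsa⟩
  · have hFs : skorohodF X s ≤ max (-X s) 0 := hFb ▸ monotoneOn_skorohodF hX hs.1 hb hs.2
    have hXs : 0 < X s := by
      have := hpos s ⟨has.le, hs.2⟩
      by_contra! h
      rw [max_eq_left (neg_nonneg.2 h)] at hFs
      linarith
    rw [← hFb, max_eq_right (neg_nonpos.2 hXs.le)]
    exact skorohodF_nonneg hX ha

end Skorohod

/-- Skorohod reflection, existence: with `F_t = sup_{s≤t} X_s⁻` and
`Z = X + F` one has `Z ≥ 0`, `F` is nondecreasing, continuous, `F₀ = 0`, and `F`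
increases only on `{Z = 0}` (it is constant on any interval where `Z > 0`). -/
theorem stmt_6 (X : ℝ → ℝ) (hX : Continuous X) (hX0 : X 0 = 0) :
    (∀ t, 0 ≤ t → 0 ≤ X t + skorohodF X t) ∧
    MonotoneOn (skorohodF X) (Set.Ici 0) ∧
    ContinuousOn (skorohodF X) (Set.Ici 0) ∧
    skorohodF X 0 = 0 ∧
    (∀ a b : ℝ, 0 ≤ a → a ≤ b →
      (∀ s ∈ Set.Icc a b, 0 < X s + skorohodF X s) →
      skorohodF X a = skorohodF X b) :=
  ⟨fun _ => add_skorohodF_nonneg hX, monotoneOn_skorohodF hX, continuousOn_skorohodF hX,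
    skorohodF_zero hX0, fun _ _ => skorohodF_eq_of_pos hX⟩
end

section
/- (Skorohod's deterministic reflection lemma, uniqueness) Let X : [0,∞) → ℝ be continuous with X_0 = 0. Suppose (Z, F) and (Y, G) are two pairs of continuous functions such that Z = X + F, Y = X + G, Z ≥ 0, Y ≥ 0, F and G are nondecreasing with F_0 = G_0 = 0, and F (resp. G) increases only on {Z = 0} (resp. {Y = 0}). Then Z = Y and F = G. -/
/-!
If `F t > G t`, go back to the last time `s ≤ t` with `F s ≤ G s`. On `(s, t]` we have
`Z = X + F > X + G = Y ≥ 0`, so `F` cannot increase there and, by continuity, `F t = F s`.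
Hence `F t = F s ≤ G s ≤ G t`, a contradiction. By symmetry `F = G`, and then `Z = Y`.
-/

open Set

theorem exists_mem_Ico_le_and_forall_Ioc_lt {f g : ℝ → ℝ} (hf : Continuous f)
    (hg : Continuous g) {a b : ℝ} (hab : a ≤ b) (ha : f a ≤ g a) (hb : g b < f b) :
    ∃ s ∈ Ico a b, f s ≤ g s ∧ ∀ u ∈ Ioc s b, g u < f u := by
  set S : Set ℝ := Icc a b ∩ {u | f u ≤ g u}
  have hS_closed : IsClosed S := isClosed_Icc.inter (isClosed_le hf hg)
  have hS_bdd : BddAbove S := ⟨b, fun u hu => hu.1.2⟩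
  have hS_ne : S.Nonempty := ⟨a, ⟨left_mem_Icc.2 hab, ha⟩⟩
  obtain ⟨⟨has, hsb⟩, hs⟩ : sSup S ∈ S := hS_closed.csSup_mem hS_ne hS_bdd
  refine ⟨sSup S, ⟨has, hsb.lt_of_ne ?_⟩, hs, fun u hu => ?_⟩
  · rintro hsb
    exact hb.not_ge (hsb ▸ hs)
  · by_contra! hu'
    exact hu.1.not_ge (le_csSup hS_bdd ⟨⟨has.trans hu.1.le, hu.2⟩, hu'⟩)

theorem le_of_eq_on_Icc_where_gt {F G : ℝ → ℝ} (hFc : Continuous F) (hGc : Continuous G)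
    (hG : MonotoneOn G (Ici 0)) (h0 : F 0 ≤ G 0)
    (hF : ∀ a b : ℝ, 0 ≤ a → a ≤ b → (∀ s ∈ Icc a b, G s < F s) → F a = F b)
    {t : ℝ} (ht : 0 ≤ t) : F t ≤ G t := by
  by_contra! h
  obtain ⟨s, ⟨hs0, hst⟩, hs, hlt⟩ := exists_mem_Ico_le_and_forall_Ioc_lt hFc hGc ht h0 h
  have hF_Ioc : Ioc s t ⊆ {u | F u = F t} := fun u hu =>
    hF u t (hs0.trans hu.1.le) hu.2 fun v hv => hlt v ⟨hu.1.trans_le hv.1, hv.2⟩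
  have hFs : F s = F t :=
    (isClosed_eq hFc continuous_const).closure_subset_iff.2 hF_Ioc
      (by rw [closure_Ioc hst.ne]; exact left_mem_Icc.2 hst.le)
  exact h.not_ge (calc
    F t = F s := hFs.symm
    _ ≤ G s := hs
    _ ≤ G t := hG hs0 (hs0.trans hst.le) hst.le)

theorem eq_on_Icc_where_gt_of_skorohod {X Z Y F G : ℝ → ℝ}
    (hZ : ∀ t, 0 ≤ t → Z t = X t + F t) (hY : ∀ t, 0 ≤ t → Y t = X t + G t)
    (hYpos : ∀ t, 0 ≤ t → 0 ≤ Y t)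
    (hFsupp : ∀ a b : ℝ, 0 ≤ a → a ≤ b → (∀ s ∈ Icc a b, Z s ≠ 0) → F a = F b) :
    ∀ a b : ℝ, 0 ≤ a → a ≤ b → (∀ s ∈ Icc a b, G s < F s) → F a = F b := by
  refine fun a b ha hab hlt => hFsupp a b ha hab fun s hs => ?_
  have hs0 : 0 ≤ s := ha.trans hs.1
  have hYZ : Y s < Z s := by
    rw [hZ s hs0, hY s hs0]
    exact add_lt_add_right (hlt s hs) _
  exact ((hYpos s hs0).trans_lt hYZ).ne'

theorem stmt_7_general (X Z Y F G : ℝ → ℝ)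
    (hFc : Continuous F) (hGc : Continuous G)
    (hZ : ∀ t, 0 ≤ t → Z t = X t + F t) (hY : ∀ t, 0 ≤ t → Y t = X t + G t)
    (hZpos : ∀ t, 0 ≤ t → 0 ≤ Z t) (hYpos : ∀ t, 0 ≤ t → 0 ≤ Y t)
    (hF : MonotoneOn F (Set.Ici 0)) (hG : MonotoneOn G (Set.Ici 0))
    (hF0 : F 0 = 0) (hG0 : G 0 = 0)
    (hFsupp : ∀ a b : ℝ, 0 ≤ a → a ≤ b → (∀ s ∈ Set.Icc a b, Z s ≠ 0) → F a = F b)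
    (hGsupp : ∀ a b : ℝ, 0 ≤ a → a ≤ b → (∀ s ∈ Set.Icc a b, Y s ≠ 0) → G a = G b) :
    ∀ t, 0 ≤ t → Z t = Y t ∧ F t = G t := by
  intro t ht
  have hle : F t ≤ G t := le_of_eq_on_Icc_where_gt hFc hGc hG (by rw [hF0, hG0])
    (eq_on_Icc_where_gt_of_skorohod hZ hY hYpos hFsupp) ht
  have hge : G t ≤ F t := le_of_eq_on_Icc_where_gt hGc hFc hF (by rw [hF0, hG0])
    (eq_on_Icc_where_gt_of_skorohod hY hZ hZpos hGsupp) ht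
  have hFG : F t = G t := le_antisymm hle hge
  exact ⟨by rw [hZ t ht, hY t ht, hFG], hFG⟩

/-- Skorohod reflection, uniqueness: two solutions `(Z,F)` and `(Y,G)`
of the Skorohod problem for a continuous `X` with `X₀ = 0` coincide on `[0,∞)`.
"F increases only on `{Z = 0}`" is expressed as: `F` is constant on every interval
on which `Z ≠ 0`. -/
theorem stmt_7 (X Z Y F G : ℝ → ℝ)
    (hX : Continuous X) (hX0 : X 0 = 0)
    (hZc : Continuous Z) (hYc : Continuous Y) (hFc : Continuous F) (hGc : Continuous G)
    (hZ : ∀ t, 0 ≤ t → Z t = X t + F t) (hY : ∀ t, 0 ≤ t → Y t = X t + G t)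
    (hZpos : ∀ t, 0 ≤ t → 0 ≤ Z t) (hYpos : ∀ t, 0 ≤ t → 0 ≤ Y t)
    (hF : MonotoneOn F (Set.Ici 0)) (hG : MonotoneOn G (Set.Ici 0))
    (hF0 : F 0 = 0) (hG0 : G 0 = 0)
    (hFsupp : ∀ a b : ℝ, 0 ≤ a → a ≤ b → (∀ s ∈ Set.Icc a b, Z s ≠ 0) → F a = F b)
    (hGsupp : ∀ a b : ℝ, 0 ≤ a → a ≤ b → (∀ s ∈ Set.Icc a b, Y s ≠ 0) → G a = G b) :
    ∀ t, 0 ≤ t → Z t = Y t ∧ F t = G t :=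
  stmt_7_general X Z Y F G hFc hGc hZ hY hZpos hYpos hF hG hF0 hG0 hFsupp hGsupp
end
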